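/- arXiv:1611.05380 — 2 statements merged into one kernel-verified Lean document; each statement's English description precedes it below -/
import Mathlib

section
/- At the SPNE, the market share of SP_1 is x_τ* = 1/2 - 8(p_2 - p_1)/(9ctε̄), and consequently SP_2's share is 1/2 + 8(p_2 - p_1)/(9ctε̄). -/
/-! Since the two SPNE qualities differ by exactly `3ε̄/4`, the difference of squares in the
indifference condition factors, and the market share splits into a price-driven term
`(v₁ - v₂)/(t(ε₂ - ε₁))` and a quality-driven term `(ε₁ + ε₂)/ε̄`. The `α`-contributions of the two
terms cancel, leaving `1/2 - 8(p₂ - p₁)/(9ctε̄)`. -/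

theorem market_share_eq_price_term_add_quality_term {t εbar v₁ v₂ ε₁ ε₂ : ℝ} (ht : t ≠ 0) (hε : ε₂ - ε₁ ≠ 0) :
    (v₁ - v₂ + t * (ε₂ ^ 2 - ε₁ ^ 2) / εbar) / (t * (ε₂ - ε₁)) =
      (v₁ - v₂) / (t * (ε₂ - ε₁)) + (ε₁ + ε₂) / εbar := by
  field_simp
  ring

theorem spne_market_share
    (c t εbar α p1 p2 ε1s ε2s v1s v2s xτ : ℝ)
    (hc : 0 < c) (ht : 0 < t) (hεbar : 0 < εbar)
    (hε2 : ε2s = (12 * εbar * c * α + 15 * c * t * εbar - 16 * (p2 - p1)) / (24 * t * c))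
    (hε1 : ε1s = ε2s - 3 * εbar / 4)
    (hv : v2s - v1s = 3 * εbar / 4 * α - (p2 - p1) / (3 * c))
    (hxτ : xτ = (v1s - v2s + t * (ε2s ^ 2 - ε1s ^ 2) / εbar) / (t * (ε2s - ε1s))) :
    xτ = 1 / 2 - 8 * (p2 - p1) / (9 * c * t * εbar) ∧
    1 - xτ = 1 / 2 + 8 * (p2 - p1) / (9 * c * t * εbar) := by
  have hgap : ε2s - ε1s = 3 * εbar / 4 := by linarith
  have hv' : v1s - v2s = -(3 * εbar / 4 * α - (p2 - p1) / (3 * c)) := by linarith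
  have hshare : xτ = 1 / 2 - 8 * (p2 - p1) / (9 * c * t * εbar) := by
    rw [hxτ, market_share_eq_price_term_add_quality_term ht.ne' (by rw [hgap]; positivity), hgap, hv', hε1, hε2]
    field_simp
    ring
  exact ⟨hshare, by rw [hshare]; ring⟩
end

section
/- At the SPNE, the equilibrium profits are π_1* = (4c/(27tε̄))·(9tε̄/8 - 2(p_2 - p_1)/c)² and π_2* = (4c/(27tε̄))·(9tε̄/8 + 2(p_2 - p_1)/c)². -/
theorem spne_profits
    (c t εbar α p1 p2 ε1s ε2s π1 π2 : ℝ)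
    (hc : 0 < c) (ht : 0 < t) (hεbar : 0 < εbar)
    (hε2 : ε2s = (12 * εbar * c * α + 15 * c * t * εbar - 16 * (p2 - p1)) / (24 * t * c))
    (hε1 : ε1s = ε2s - 3 * εbar / 4)
    (hπ1 : π1 = (c / (9 * t * (ε2s - ε1s))) *
      (-((p2 - p1) / c) + (-α + t * (εbar + ε2s + ε1s) / εbar) * (ε2s - ε1s)) ^ 2)
    (hπ2 : π2 = (c / (9 * t * (ε2s - ε1s))) *
      ((p2 - p1) / c + (α + t * (2 * εbar - ε2s - ε1s) / εbar) * (ε2s - ε1s)) ^ 2) :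
    π1 = (4 * c / (27 * t * εbar)) * (9 * t * εbar / 8 - 2 * (p2 - p1) / c) ^ 2 ∧
    π2 = (4 * c / (27 * t * εbar)) * (9 * t * εbar / 8 + 2 * (p2 - p1) / c) ^ 2 := by
  have hc' := hc.ne'
  have ht' := ht.ne'
  have hε' := hεbar.ne'
  have hdiff : ε2s - ε1s = 3 * εbar / 4 := by rw [hε1]; ring
  have hsum : εbar + ε2s + ε1s = εbar + (12 * εbar * c * α + 15 * c * t * εbar - 16 * (p2 - p1)) / (12 * t * c)
      - 3 * εbar / 4 := by rw [hε1, hε2]; field_simp; ring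
  rw [hdiff, hsum] at hπ1
  have hsum2 : 2 * εbar - ε2s - ε1s = 2 * εbar + 3 * εbar / 4
      - (12 * εbar * c * α + 15 * c * t * εbar - 16 * (p2 - p1)) / (12 * t * c) := by
    rw [hε1, hε2]; field_simp; ring
  rw [hdiff, hsum2] at hπ2
  subst hπ1 hπ2
  constructor <;> (field_simp; ring)
end
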